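/- arXiv:2601.13598 — 5 statements merged into one kernel-verified Lean document; each statement's English description precedes it below -/
import Mathlib

section
/- Every real skew-symmetric matrix X of size 2n-by-2n admits a factorization X = U T U^T where U is a real orthogonal matrix and T is block-diagonal with 2-by-2 blocks of the form [[0, b_j], [-b_j, 0]]. Moreover, the spectrum of X is {±i b_1, ..., ±i b_n}. -/
open Matrix

/-- Block-diagonal 2n×2n matrix with 2×2 blocks `[[0, b k],[-b k, 0]]`. -/
def blockT (n : ℕ) (b : ℕ → ℝ) : Matrix (Fin (2*n)) (Fin (2*n)) ℝ :=
  Matrix.of fun i j =>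
    if i.1 % 2 = 0 ∧ j.1 = i.1 + 1 then b (i.1 / 2)
    else if j.1 % 2 = 0 ∧ i.1 = j.1 + 1 then -(b (j.1 / 2)) else 0

open Module Polynomial Submodule
open scoped RealInnerProductSpace

/-!
`X` acts on Euclidean space as a skew-adjoint operator `T`, so `T²` is self-adjoint. If `w` is a
unit eigenvector of `T²` with `T w ≠ 0`, then `w` and `T w / ‖T w‖` span a `T`-invariant plane on
which `T` is a `2 × 2` skew block; the orthogonal complement of that plane is again invariant, and
induction on the dimension gives an orthonormal basis in which `T` is block diagonal. (If `T` kills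
every eigenvector of `T²`, then `T = 0` and any orthonormal basis works.) The spectrum is then read
off the characteristic polynomial `∏ₖ (X² + bₖ²)`.
-/

def skewBlock {R : Type*} [Ring R] (c : R) : Matrix (Fin 2) (Fin 2) R := !![0, c; -c, 0]

theorem charpoly_skewBlock {R : Type*} [CommRing R] [Nontrivial R] (c : R) :
    (skewBlock c).charpoly = X ^ 2 + C (c ^ 2) := by
  simp [skewBlock, charpoly_fin_two, trace_fin_two, det_fin_two, sq]

theorem Matrix.charpoly_blockDiagonal {R m o : Type*} [CommRing R] [Fintype m] [DecidableEq m]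
    [Fintype o] [DecidableEq o] (M : o → Matrix m m R) :
    (blockDiagonal M).charpoly = ∏ k, (M k).charpoly := by
  simp only [charpoly, ← det_blockDiagonal]
  congr 1
  ext ⟨i, k⟩ ⟨j, l⟩
  rcases eq_or_ne k l with rfl | hkl
  · by_cases hij : i = j <;> simp [blockDiagonal_apply, hij]
  · simp [blockDiagonal_apply, hkl]

theorem LinearMap.toMatrix_eq_blockDiagonal_skewBlock {R M ι : Type*} [CommRing R]
    [AddCommGroup M] [Module R M] [Fintype ι] [DecidableEq ι] (B : Basis (Fin 2 × ι) R M)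
    (f : M →ₗ[R] M) (b : ι → R)
    (hf : ∀ k, f (B (0, k)) = -b k • B (1, k) ∧ f (B (1, k)) = b k • B (0, k)) :
    toMatrix B B f = blockDiagonal fun k => skewBlock (b k) := by
  ext ⟨r, k⟩ ⟨s, l⟩
  rw [toMatrix_apply, blockDiagonal_apply]
  fin_cases r <;> fin_cases s <;> by_cases hkl : k = l <;> simp [skewBlock, hf, hkl, eq_comm]

theorem LinearMap.toMatrix_reindex {R M ι κ : Type*} [CommRing R] [AddCommGroup M] [Module R M]
    [Fintype ι] [DecidableEq ι] [Fintype κ] [DecidableEq κ] (B : Basis ι R M) (e : ι ≃ κ)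
    (f : M →ₗ[R] M) :
    toMatrix (B.reindex e) (B.reindex e) f = reindex e e (toMatrix B B f) := by
  ext i j
  simp [toMatrix_apply]

theorem OrthonormalBasis.toMatrix_eq_transpose {ι κ E : Type*} [Fintype ι] [Fintype κ]
    [NormedAddCommGroup E] [InnerProductSpace ℝ E] (a : OrthonormalBasis ι ℝ E)
    (b : OrthonormalBasis κ ℝ E) :
    a.toBasis.toMatrix b = (b.toBasis.toMatrix a)ᵀ := by
  ext i j
  simp [Basis.toMatrix_apply, OrthonormalBasis.repr_apply_apply, real_inner_comm]

theorem Matrix.eq_conj_toMatrix_toEuclideanLin {ι : Type*} [Fintype ι] [DecidableEq ι]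
    (X : Matrix ι ι ℝ) (B : OrthonormalBasis ι ℝ (EuclideanSpace ℝ ι)) :
    X = (EuclideanSpace.basisFun ι ℝ).toBasis.toMatrix B *
      LinearMap.toMatrix B.toBasis B.toBasis (toEuclideanLin X) *
      ((EuclideanSpace.basisFun ι ℝ).toBasis.toMatrix B)ᵀ := by
  have h := basis_toMatrix_mul_linearMap_toMatrix_mul_basis_toMatrix
    (EuclideanSpace.basisFun ι ℝ).toBasis B.toBasis (EuclideanSpace.basisFun ι ℝ).toBasis B.toBasis
    (toEuclideanLin X)
  rwa [toEuclideanLin_eq_toLin_orthonormal, LinearMap.toMatrix_toLin, OrthonormalBasis.coe_toBasis,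
    OrthonormalBasis.coe_toBasis, B.toMatrix_eq_transpose, eq_comm] at h

theorem Matrix.spectrum_map_algebraMap {ι K L : Type*} [Fintype ι] [DecidableEq ι] [Field K]
    [Field L] [Algebra K L] (M : Matrix ι ι K) :
    spectrum L (M.map (algebraMap K L)) = {z | aeval z M.charpoly = 0} := by
  ext z
  rw [Set.mem_ofPred_eq, mem_spectrum_iff_isRoot_charpoly, charpoly_map, IsRoot,
    eval_map_algebraMap]

theorem Complex.sq_add_ofReal_sq_eq_zero_iff (z : ℂ) (b : ℝ) :
    z ^ 2 + (b : ℂ) ^ 2 = 0 ↔ z = I * b ∨ z = -(I * b) := by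
  rw [← sq_eq_sq_iff_eq_or_eq_neg, mul_pow, I_sq, neg_one_mul, eq_neg_iff_add_eq_zero]

theorem Orthonormal.finCases {𝕜 F κ : Type*} [RCLike 𝕜] [NormedAddCommGroup F]
    [InnerProductSpace 𝕜 F] {n : ℕ} {f : κ → F} {g : κ × Fin n → F}
    (hf : Orthonormal 𝕜 f) (hg : Orthonormal 𝕜 g) (hfg : ∀ i j, inner 𝕜 (f i) (g j) = 0) :
    Orthonormal 𝕜 fun p : κ × Fin (n + 1) => (Fin.cases (f p.1) (fun k => g (p.1, k)) p.2 : F) := by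
  classical
  rw [orthonormal_iff_ite] at hf hg ⊢
  rintro ⟨r, k⟩ ⟨s, l⟩
  induction k using Fin.cases <;> induction l using Fin.cases
  · simpa using hf r s
  · simp [hfg, (Fin.succ_ne_zero _).symm]
  · simp [inner_eq_zero_symm.mp (hfg _ _)]
  · simpa [Prod.ext_iff] using hg (r, _) (s, _)

section SkewSymmetric

variable {E : Type*} [NormedAddCommGroup E] [InnerProductSpace ℝ E]

def LinearMap.IsSkewSymmetric (T : E →ₗ[ℝ] E) : Prop :=
  ∀ x y, ⟪T x, y⟫ = -⟪x, T y⟫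

namespace LinearMap.IsSkewSymmetric

variable {T : E →ₗ[ℝ] E} (hT : T.IsSkewSymmetric)
include hT

theorem inner_self_apply (x : E) : ⟪x, T x⟫ = 0 := by
  have := hT x x
  rw [real_inner_comm] at this
  linarith

theorem isSymmetric_comp_self : (T ∘ₗ T).IsSymmetric := fun x y => by
  rw [comp_apply, comp_apply, hT, hT x, neg_neg]

theorem orthogonal_invariant {K : Submodule ℝ E} (hK : ∀ x ∈ K, T x ∈ K) :
    ∀ x ∈ Kᗮ, T x ∈ Kᗮ := fun x hx y hy => by
  rw [real_inner_comm, hT, inner_eq_zero_symm.mp (hx _ (hK y hy)), neg_zero]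

theorem restrict_invariant {K : Submodule ℝ E} (hK : ∀ x ∈ K, T x ∈ K) :
    (T.restrict hK).IsSkewSymmetric :=
  fun x y => hT x y

theorem apply_apply_eq_neg_norm_sq_smul {w : E} (hw : ‖w‖ = 1) {μ : ℝ} (h : T (T w) = μ • w) :
    T (T w) = -‖T w‖ ^ 2 • w := by
  have : μ = ⟪T (T w), w⟫ := by simp [h, real_inner_smul_left, hw]
  rw [h, this, hT, real_inner_self_eq_norm_sq]

theorem exists_orthonormal_pair_of_eigenvector {w : E} (hw : ‖w‖ = 1) (hTw : T w ≠ 0) {μ : ℝ}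
    (h : T (T w) = μ • w) :
    ∃ (u : Fin 2 → E) (b : ℝ), Orthonormal ℝ u ∧ T (u 0) = -b • u 1 ∧ T (u 1) = b • u 0 := by
  have hb : ‖T w‖ ≠ 0 := norm_ne_zero_iff.mpr hTw
  have h01 : ⟪w, ‖T w‖⁻¹ • T w⟫ = 0 := by
    rw [real_inner_smul_right, hT.inner_self_apply, mul_zero]
  refine ⟨![w, ‖T w‖⁻¹ • T w], -‖T w‖, ?_, ?_, ?_⟩
  · rw [orthonormal_iff_ite]
    intro i j
    fin_cases i <;> fin_cases j <;> simp [h01, inner_eq_zero_symm.mp h01, norm_smul, hw, hb]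
  · simp [smul_smul, hb]
  · simp [hT.apply_apply_eq_neg_norm_sq_smul hw h, smul_smul]
    field_simp

theorem exists_orthonormal_pair [FiniteDimensional ℝ E] (hE : 2 ≤ finrank ℝ E) :
    ∃ (u : Fin 2 → E) (b : ℝ), Orthonormal ℝ u ∧ T (u 0) = -b • u 1 ∧ T (u 1) = b • u 0 := by
  let e := hT.isSymmetric_comp_self.eigenvectorBasis rfl
  by_cases h : ∀ i, T (e i) = 0
  · have hT0 : T = 0 := e.toBasis.ext fun i => by simpa using h i
    exact ⟨e ∘ Fin.castLE hE, 0, e.orthonormal.comp _ (Fin.castLE_injective hE), by simp [hT0]⟩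
  · obtain ⟨i, hi⟩ := not_forall.mp h
    exact hT.exists_orthonormal_pair_of_eigenvector (e.orthonormal.1 i) hi
      (hT.isSymmetric_comp_self.apply_eigenvectorBasis rfl i)

theorem exists_orthonormal_pairs [FiniteDimensional ℝ E] {n : ℕ} (hE : finrank ℝ E = 2 * n) :
    ∃ (v : Fin 2 × Fin n → E) (b : Fin n → ℝ), Orthonormal ℝ v ∧
      ∀ k, T (v (0, k)) = -b k • v (1, k) ∧ T (v (1, k)) = b k • v (0, k) := by
  induction n generalizing E with
  | zero => exact ⟨fun p => p.2.elim0, finZeroElim, .of_isEmpty _, finZeroElim⟩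
  | succ n ih =>
    obtain ⟨u, c, hu, hu0, hu1⟩ := hT.exists_orthonormal_pair (by omega)
    set K := span ℝ (Set.range u)
    have hK : ∀ x ∈ K, T x ∈ K := by
      refine fun x hx => (span_le (p := K.comap T)).mpr (Set.range_subset_iff.mpr fun i => ?_) hx
      fin_cases i
      · simpa [hu0] using K.smul_mem (-c) (subset_span ⟨1, rfl⟩)
      · simpa [hu1] using K.smul_mem c (subset_span ⟨0, rfl⟩)
    have hKperp : finrank ℝ Kᗮ = 2 * n := by
      have := K.finrank_add_finrank_orthogonal
      rw [finrank_span_eq_card hu.linearIndependent, Fintype.card_fin] at this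
      omega
    obtain ⟨v, b, hv, hvb⟩ := ih (hT.restrict_invariant (hT.orthogonal_invariant hK)) hKperp
    refine ⟨fun p => Fin.cases (u p.1) (fun k => (v (p.1, k) : E)) p.2, Fin.cons c b,
      hu.finCases (hv.comp_linearIsometry Kᗮ.subtypeₗᵢ) fun i j =>
        inner_right_of_mem_orthogonal (subset_span (Set.mem_range_self i)) (v j).2, fun k => ?_⟩
    induction k using Fin.cases with
    | zero => exact ⟨hu0, hu1⟩
    | succ k =>
      simp only [Fin.cases_succ, Fin.cons_succ, ← coe_restrict_apply (hT.orthogonal_invariant hK),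
        (hvb k).1, (hvb k).2]
      exact ⟨rfl, rfl⟩

theorem exists_orthonormalBasis_toMatrix_eq_blockDiagonal [FiniteDimensional ℝ E] {n : ℕ}
    (hE : finrank ℝ E = 2 * n) :
    ∃ (B : OrthonormalBasis (Fin 2 × Fin n) ℝ E) (b : Fin n → ℝ),
      toMatrix B.toBasis B.toBasis T = blockDiagonal fun k => skewBlock (b k) := by
  obtain ⟨v, b, hv, hvb⟩ := hT.exists_orthonormal_pairs hE
  let B := OrthonormalBasis.mk hv
    (hv.linearIndependent.span_eq_top_of_card_eq_finrank' (by simp [hE])).ge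
  exact ⟨B, b, toMatrix_eq_blockDiagonal_skewBlock B.toBasis T b (by simpa [B] using hvb)⟩

end LinearMap.IsSkewSymmetric

theorem Matrix.isSkewSymmetric_toEuclideanLin {ι : Type*} [Fintype ι] [DecidableEq ι]
    {X : Matrix ι ι ℝ} (hX : Xᵀ = -X) : (toEuclideanLin X).IsSkewSymmetric := fun x y => by
  rw [← LinearMap.adjoint_inner_right, ← toEuclideanLin_conjTranspose_eq_adjoint,
    conjTranspose_eq_transpose_of_trivial, hX, map_neg, LinearMap.neg_apply, inner_neg_right]

end SkewSymmetric

def finTwoProdEquiv (n : ℕ) : Fin 2 × Fin n ≃ Fin (2 * n) :=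
  (Equiv.prodComm _ _).trans (finProdFinEquiv.trans (finCongr (Nat.mul_comm n 2)))

@[simp]
theorem finTwoProdEquiv_val {n : ℕ} (p : Fin 2 × Fin n) :
    (finTwoProdEquiv n p : ℕ) = 2 * p.2 + p.1 := by
  simp [finTwoProdEquiv, finProdFinEquiv, add_comm]

theorem blockT_eq_reindex (n : ℕ) (b : ℕ → ℝ) :
    blockT n b = reindex (finTwoProdEquiv n) (finTwoProdEquiv n)
      (blockDiagonal fun k : Fin n => skewBlock (b k)) := by
  ext i j
  obtain ⟨⟨r, k⟩, rfl⟩ := (finTwoProdEquiv n).surjective i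
  obtain ⟨⟨s, l⟩, rfl⟩ := (finTwoProdEquiv n).surjective j
  rw [reindex_apply, submatrix_apply, Equiv.symm_apply_apply, Equiv.symm_apply_apply,
    blockDiagonal_apply, blockT, of_apply, finTwoProdEquiv_val, finTwoProdEquiv_val]
  rcases eq_or_ne k l with rfl | hkl
  · fin_cases r <;> fin_cases s <;> simp [skewBlock]
  · have : (k : ℕ) ≠ l := Fin.val_ne_of_ne hkl
    fin_cases r <;> fin_cases s <;> simp [hkl, this, this.symm]
    rw [if_neg (by omega), if_neg (by omega)]

theorem charpoly_blockT (n : ℕ) (b : ℕ → ℝ) :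
    (blockT n b).charpoly = ∏ k : Fin n, (X ^ 2 + C (b k ^ 2)) := by
  rw [blockT_eq_reindex, charpoly_reindex, charpoly_blockDiagonal]
  simp only [charpoly_skewBlock]

theorem real_skew_canonical_form (n : ℕ)
    (X : Matrix (Fin (2*n)) (Fin (2*n)) ℝ) (hX : Xᵀ = -X) :
    ∃ (U : Matrix (Fin (2*n)) (Fin (2*n)) ℝ) (b : ℕ → ℝ),
      U * Uᵀ = 1 ∧ Uᵀ * U = 1 ∧
      X = U * blockT n b * Uᵀ ∧
      spectrum ℂ (X.map ((↑) : ℝ → ℂ)) =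
        {z : ℂ | ∃ k < n, z = Complex.I * (b k : ℂ) ∨ z = -(Complex.I * (b k : ℂ))} := by
  obtain ⟨B, b', hB⟩ := (isSkewSymmetric_toEuclideanLin hX)
    |>.exists_orthonormalBasis_toMatrix_eq_blockDiagonal (finrank_euclideanSpace_fin (n := 2 * n))
  set b : ℕ → ℝ := fun k => if h : k < n then b' ⟨k, h⟩ else 0
  have hb (k : Fin n) : b k = b' k := dif_pos k.2
  set B' := B.reindex (finTwoProdEquiv n)
  set U := (EuclideanSpace.basisFun _ ℝ).toBasis.toMatrix B'
  have hU := (EuclideanSpace.basisFun _ ℝ).toMatrix_orthonormalBasis_mem_orthogonal B'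
  have hUUt : U * Uᵀ = 1 := by simpa using (mem_orthogonalGroup_iff _ ℝ).mp hU
  have hUtU : Uᵀ * U = 1 := by simpa using (mem_orthogonalGroup_iff' _ ℝ).mp hU
  have hXU : X = U * blockT n b * Uᵀ := by
    simp only [blockT_eq_reindex, hb]
    rw [← hB, ← LinearMap.toMatrix_reindex, ← OrthonormalBasis.reindex_toBasis]
    exact X.eq_conj_toMatrix_toEuclideanLin B'
  refine ⟨U, b, hUUt, hUtU, hXU, ?_⟩
  rw [show X.map ((↑) : ℝ → ℂ) = X.map (algebraMap ℝ ℂ) from rfl, spectrum_map_algebraMap, hXU,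
    charpoly_mul_comm, ← mul_assoc, hUtU, one_mul, charpoly_blockT]
  ext z
  simp [Finset.prod_eq_zero_iff, Complex.sq_add_ofReal_sq_eq_zero_iff, Fin.exists_iff]
end

section
/- The determinant of any real skew-symmetric 2n-by-2n matrix is the square of a polynomial function with real coefficients in the matrix entries; i.e., there exists a polynomial p in the entries x_{ij} such that det(X) = p(X)^2 for all skew-symmetric X. -/
/-!
Over a field in which `2 ≠ 0`, the determinant of a skew-symmetric matrix of even size is a
square: if the first row vanishes it is `0`; otherwise a nonzero entry `a = A 0 j` is moved to
position `(0, 1)`, and the Schur complement of the resulting `2 × 2` block gives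
`det A = a ^ 2 * det S` with `S` skew-symmetric of size two less.

Applied to the generic skew-symmetric matrix `(x_ij - x_ji)` over the fraction field of
`ℝ[x_ij]`, this makes its determinant a square there, hence a square `t ^ 2` in the integrally
closed ring `ℝ[x_ij]`. Specialising the variables to the entries of `X` turns the generic matrix
into `X - Xᵀ = 2 • X`, so `t / 2 ^ n` is the required polynomial.
-/

open Matrix MvPolynomial

theorem Fin.exists_sum_equiv_inl_zero_inl_one {m : ℕ} {j : Fin (m + 2)} (hj : j ≠ 0) :
    ∃ e : Fin 2 ⊕ Fin m ≃ Fin (m + 2), e (Sum.inl 0) = 0 ∧ e (Sum.inl 1) = j := by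
  let e₀ : Fin 2 ⊕ Fin m ≃ Fin (m + 2) := finSumFinEquiv.trans (finCongr (add_comm 2 m))
  have h0 : e₀ (Sum.inl 0) = 0 := by ext; simp [e₀]
  have h1 : e₀ (Sum.inl 1) = 1 := by ext; simp [e₀]
  refine ⟨e₀.trans (Equiv.swap 1 j), ?_, ?_⟩
  · simp [h0, Equiv.swap_apply_of_ne_of_ne Fin.zero_ne_one hj.symm]
  · simp [h1]

theorem IsIntegrallyClosed.isSquare_of_isSquare_algebraMap {R K : Type*} [CommRing R] [CommRing K]
    [Algebra R K] [IsFractionRing R K] [IsIntegrallyClosed R] {x : R}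
    (hx : IsSquare (algebraMap R K x)) : IsSquare x := by
  obtain ⟨u, hu⟩ := hx
  have hint : IsIntegral R u :=
    IsIntegral.of_pow two_pos (by rw [sq, ← hu]; exact isIntegral_algebraMap)
  obtain ⟨t, rfl⟩ := IsIntegrallyClosed.isIntegral_iff.mp hint
  exact ⟨t, IsFractionRing.injective R K (by rw [hu, map_mul])⟩

namespace Matrix

section CommRing

variable {m n R : Type*} [Fintype m] [DecidableEq m] [CommRing R]

theorem inv_neg (A : Matrix m m R) : (-A)⁻¹ = -A⁻¹ := by
  by_cases hA : IsUnit A.det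
  · exact inv_eq_right_inv (by rw [neg_mul_neg, mul_nonsing_inv A hA])
  · have hnegA : ¬IsUnit (-A).det := by
      rwa [det_neg, (isUnit_neg_one.pow _).mul_left_iff]
    rw [nonsing_inv_apply_not_isUnit A hA, nonsing_inv_apply_not_isUnit _ hnegA, neg_zero]

theorem apply_eq_neg_of_transpose_eq_neg {A : Matrix n n R} (hA : Aᵀ = -A) (i j : n) :
    A j i = -A i j := by
  simpa using congrFun (congrFun hA i) j

theorem apply_self_eq_zero_of_transpose_eq_neg [NoZeroDivisors R] [NeZero (2 : R)]
    {A : Matrix n n R} (hA : Aᵀ = -A) (i : n) : A i i = 0 := by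
  have h2 : 2 * A i i = 0 := by linear_combination apply_eq_neg_of_transpose_eq_neg hA i i
  exact (mul_eq_zero.mp h2).resolve_left two_ne_zero

theorem det_fin_two_of_transpose_eq_neg [NoZeroDivisors R] [NeZero (2 : R)]
    {A : Matrix (Fin 2) (Fin 2) R} (hA : Aᵀ = -A) : A.det = A 0 1 ^ 2 := by
  rw [det_fin_two, apply_self_eq_zero_of_transpose_eq_neg hA,
    apply_self_eq_zero_of_transpose_eq_neg hA, apply_eq_neg_of_transpose_eq_neg hA]
  ring

theorem transpose_schur_eq_neg [Fintype n] {A : Matrix m m R} {B : Matrix m n R}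
    {C : Matrix n m R} {D : Matrix n n R} (h : (fromBlocks A B C D)ᵀ = -fromBlocks A B C D) :
    (D - C * A⁻¹ * B)ᵀ = -(D - C * A⁻¹ * B) := by
  rw [fromBlocks_transpose, fromBlocks_neg, fromBlocks_inj] at h
  obtain ⟨hA, hC, hB, hD⟩ := h
  rw [transpose_sub, transpose_mul, transpose_mul, hD, transpose_nonsing_inv, hA, inv_neg, hB, hC]
  simp only [Matrix.neg_mul, Matrix.mul_neg, neg_neg, Matrix.mul_assoc]
  abel

end CommRing

section Field

variable {n K : Type*} [Fintype n] [DecidableEq n] [Field K] [NeZero (2 : K)]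

theorem det_fromBlocks_of_transpose_eq_neg {A : Matrix (Fin 2) (Fin 2) K} {B : Matrix (Fin 2) n K}
    {C : Matrix n (Fin 2) K} {D : Matrix n n K} (h : (fromBlocks A B C D)ᵀ = -fromBlocks A B C D)
    (hA : A 0 1 ≠ 0) : (fromBlocks A B C D).det = A 0 1 ^ 2 * (D - C * A⁻¹ * B).det := by
  have hdetA : A.det = A 0 1 ^ 2 := by
    refine det_fin_two_of_transpose_eq_neg ?_
    rw [fromBlocks_transpose, fromBlocks_neg, fromBlocks_inj] at h
    exact h.1
  have : Invertible A := invertibleOfIsUnitDet A (by rw [hdetA]; exact (pow_ne_zero 2 hA).isUnit)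
  rw [det_fromBlocks₁₁, invOf_eq_nonsing_inv, hdetA]

theorem isSquare_det_of_transpose_eq_neg :
    ∀ {m : ℕ} {A : Matrix (Fin (2 * m)) (Fin (2 * m)) K}, Aᵀ = -A → IsSquare A.det
  | 0, _, _ => by simp [det_isEmpty]
  | m + 1, A, hA => by
    by_cases hrow : ∀ j, A 0 j = 0
    · rw [det_eq_zero_of_row_eq_zero 0 hrow]
      exact IsSquare.zero
    push Not at hrow
    obtain ⟨j, hj⟩ := hrow
    have hj0 : j ≠ 0 := by
      rintro rfl
      exact hj (apply_self_eq_zero_of_transpose_eq_neg hA 0)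
    obtain ⟨e, he0, he1⟩ := Fin.exists_sum_equiv_inl_zero_inl_one (m := 2 * m) hj0
    set Y := A.submatrix e e
    have hdet : A.det = Y.det := (det_submatrix_equiv_self e A).symm
    have hYskew : Yᵀ = -Y := by rw [transpose_submatrix, hA, submatrix_neg]; rfl
    rw [← fromBlocks_toBlocks Y] at hYskew
    have hpivot : Y.toBlocks₁₁ 0 1 ≠ 0 := by simpa [Y, toBlocks₁₁, he0, he1] using hj
    rw [hdet, ← fromBlocks_toBlocks Y, det_fromBlocks_of_transpose_eq_neg hYskew hpivot]
    exact (IsSquare.sq _).mul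
      (isSquare_det_of_transpose_eq_neg (transpose_schur_eq_neg hYskew))

end Field

noncomputable def genericSkew (ι R : Type*) [CommRing R] :
    Matrix ι ι (MvPolynomial (ι × ι) R) :=
  of fun i j => X (i, j) - X (j, i)

variable {ι R : Type*} [CommRing R]

theorem genericSkew_transpose : (genericSkew ι R)ᵀ = -genericSkew ι R := by
  ext i j
  simp [genericSkew]

theorem map_eval_genericSkew (A : Matrix ι ι R) :
    (genericSkew ι R).map (eval fun ij => A ij.1 ij.2) = A - Aᵀ := by
  ext i j
  simp [genericSkew]

theorem isSquare_det_genericSkew (K : Type*) [Field K] [NeZero (2 : K)] (n : ℕ) :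
    IsSquare (genericSkew (Fin (2 * n)) K).det := by
  let L := FractionRing (MvPolynomial (Fin (2 * n) × Fin (2 * n)) K)
  have : NeZero (2 : L) := by
    have := NeZero.of_injective (a := (2 : K)) (algebraMap K L).injective
    rwa [map_ofNat] at this
  have hskew : ((genericSkew (Fin (2 * n)) K).map (algebraMap _ L))ᵀ =
      -(genericSkew (Fin (2 * n)) K).map (algebraMap _ L) := by
    rw [← transpose_map, genericSkew_transpose, Matrix.map_neg _ (map_neg _)]
  refine IsIntegrallyClosed.isSquare_of_isSquare_algebraMap (K := L) ?_
  rw [RingHom.map_det]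
  exact isSquare_det_of_transpose_eq_neg hskew

end Matrix

theorem det_skew_is_square_of_polynomial (n : ℕ) :
    ∃ p : MvPolynomial (Fin (2*n) × Fin (2*n)) ℝ,
      ∀ X : Matrix (Fin (2*n)) (Fin (2*n)) ℝ, Xᵀ = -X →
        X.det = (MvPolynomial.eval (fun ij => X ij.1 ij.2) p)^2 := by
  obtain ⟨t, ht⟩ := isSquare_det_genericSkew ℝ n
  refine ⟨C ((2 : ℝ) ^ n)⁻¹ * t, fun X hX => ?_⟩
  have hscaled : ((2 : ℝ) ^ n) ^ 2 * X.det = eval (fun ij => X ij.1 ij.2) t ^ 2 := by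
    calc ((2 : ℝ) ^ n) ^ 2 * X.det = (X - Xᵀ).det := by
          rw [hX, sub_neg_eq_add, ← two_smul ℝ X, det_smul, Fintype.card_fin]; ring
      _ = eval (fun ij => X ij.1 ij.2) (genericSkew (Fin (2 * n)) ℝ).det := by
          rw [← map_eval_genericSkew, RingHom.map_det]; rfl
      _ = _ := by rw [ht, map_mul, sq]
  rw [map_mul, eval_C, mul_pow, ← hscaled]
  field_simp
end

section
/- The set of invertible real skew-symmetric 2n-by-2n matrices is not path-connected: in particular J_+ (the direct sum of n copies of [[0,1],[-1,0]]) and J_- (the same but with the first block negated) cannot be joined by a continuous path of invertible skew-symmetric matrices. -/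
open Matrix

/-- The direct sum of `n` copies of `[[0,1],[-1,0]]`, as a 2n×2n real matrix. -/
def Jpos (n : ℕ) : Matrix (Fin (2*n)) (Fin (2*n)) ℝ :=
  Matrix.of fun i j =>
    if i.1 % 2 = 0 ∧ j.1 = i.1 + 1 then 1
    else if j.1 % 2 = 0 ∧ i.1 = j.1 + 1 then -1 else 0

/-- Same as `Jpos` but with the first 2×2 block negated. -/
def Jneg (n : ℕ) : Matrix (Fin (2*n)) (Fin (2*n)) ℝ :=
  Matrix.of fun i j =>
    if i.1 < 2 ∧ j.1 < 2 then -(Jpos n i j) else Jpos n i j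

/-!
The sign of the Pfaffian separates `J₊` from `J₋`. Index the rows by `Fin 2 × κ`, the `k`-th pair
being `(0, k), (1, k)`. The Pfaffian of `A` is then, up to a positive factor, the value on the
standard basis of the alternatization of `v ↦ ∏ₖ v (0, k) ⬝ᵥ A *ᵥ v (1, k)`. An alternating form of
top degree is a multiple of the determinant, so `Pf (L * A * Lᵀ) = det L * Pf A`. Congruences of
determinant one bring an invertible skew matrix to 2×2 block diagonal form, where the Pfaffian is a
positive multiple of the product of the (nonzero) block entries. So the Pfaffian is a continuous
function without zeros on the invertible skew matrices, and it has opposite signs at `J₊` and `J₋`.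
-/

open Equiv

variable {ι κ R : Type*}

section RowOperations

variable [CommRing R] [DecidableEq ι]

theorem transpose_transvection (i j : ι) (c : R) :
    (transvection i j c)ᵀ = transvection j i c := by
  simp [transvection, transpose_single]

def addRowsMatrix (c d : ι → R) (u v : ι) : Matrix ι ι R :=
  of fun i => Pi.single i 1 + c i • Pi.single u 1 + d i • Pi.single v 1

variable [Fintype ι]

theorem det_addRowsMatrix {c d : ι → R} {u v : ι} (hcu : c u = 0) (hcv : c v = 0)
    (hdv : d v = 0) : (addRowsMatrix c d u v).det = 1 := by
  let L₁ : Matrix ι ι R := of fun i j => (1 : Matrix ι ι R) i j + c i * (1 : Matrix ι ι R) u j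
  have hL₁ : L₁.det = 1 :=
    (det_eq_of_forall_row_eq_smul_add_const (B := 1) c u hcu fun i j => rfl).trans det_one
  rw [← hL₁]
  refine det_eq_of_forall_row_eq_smul_add_const d v hdv fun i j => ?_
  simp [addRowsMatrix, L₁, hcv, one_eq_pi_single]

theorem addRowsMatrix_mul_mul_transpose_apply (c d : ι → R) (u v : ι) (S : Matrix ι ι R)
    (i j : ι) :
    (addRowsMatrix c d u v * S * (addRowsMatrix c d u v)ᵀ) i j =
      S i j + c j * S i u + d j * S i v + c i * (S u j + c j * S u u + d j * S u v) +
        d i * (S v j + c j * S v u + d j * S v v) := by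
  rw [mul_mul_apply, transpose_transpose]
  change (Pi.single i 1 + c i • Pi.single u 1 + d i • Pi.single v 1) ⬝ᵥ
    S *ᵥ (Pi.single j 1 + c j • Pi.single u 1 + d j • Pi.single v 1) = _
  simp [dotProduct_add, add_dotProduct, mulVec_add, mulVec_smul]
  ring

end RowOperations

section Skew

variable [CommRing R] {S : Matrix ι ι R}

theorem apply_swap_of_transpose_eq_neg (hS : Sᵀ = -S) (i j : ι) : S j i = -S i j :=
  congrFun (congrFun hS i) j

theorem apply_self_of_transpose_eq_neg [IsDomain R] [CharZero R] (hS : Sᵀ = -S) (i : ι) :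
    S i i = 0 :=
  self_eq_neg.mp (apply_swap_of_transpose_eq_neg hS i i)

variable [Fintype ι]

theorem transpose_mul_mul_transpose_eq_neg (hS : Sᵀ = -S) (L : Matrix ι ι R) :
    (L * S * Lᵀ)ᵀ = -(L * S * Lᵀ) := by
  simp [transpose_mul, hS, Matrix.mul_assoc]

theorem mul_mul_transpose_mul_mul_transpose (L₁ L₂ : Matrix ι ι R) :
    L₂ * (L₁ * S * L₁ᵀ) * L₂ᵀ = L₂ * L₁ * S * (L₂ * L₁)ᵀ := by
  simp [transpose_mul, Matrix.mul_assoc]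

end Skew

section Pfaffian

variable [Fintype κ] [DecidableEq κ] [CommRing R]

/-- `2ⁿ n!` times the Pfaffian (for `n = card κ`), which avoids dividing in `R`. -/
def pfaffianSum (A : Matrix (Fin 2 × κ) (Fin 2 × κ) R) : R :=
  ∑ σ : Perm (Fin 2 × κ), Perm.sign σ • ∏ k, A (σ (0, k)) (σ (1, k))

theorem prod_update_eq_mul_prod_erase [DecidableEq (Fin 2 × κ)] {M : Type*} (f : M → M → R)
    (v : Fin 2 × κ → M) (a : Fin 2) (k₀ : κ) (x : M) :
    ∏ k, f (Function.update v (a, k₀) x (0, k)) (Function.update v (a, k₀) x (1, k)) =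
      f (Function.update v (a, k₀) x (0, k₀)) (Function.update v (a, k₀) x (1, k₀)) *
        ∏ k ∈ Finset.univ.erase k₀, f (v (0, k)) (v (1, k)) := by
  rw [← Finset.mul_prod_erase _ _ (Finset.mem_univ k₀)]
  congr 1
  refine Finset.prod_congr rfl fun k hk => ?_
  simp [Function.update_of_ne, Finset.ne_of_mem_erase hk]

def pfaffianMultilinear (A : Matrix (Fin 2 × κ) (Fin 2 × κ) R) :
    MultilinearMap R (fun _ : Fin 2 × κ => Fin 2 × κ → R) R where
  toFun v := ∏ k, v (0, k) ⬝ᵥ A *ᵥ v (1, k)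
  map_update_add' := by
    intro _ v ⟨a, k₀⟩ x y
    simp only [prod_update_eq_mul_prod_erase fun x y => x ⬝ᵥ A *ᵥ y]
    fin_cases a <;> simp [add_mul, mulVec_add, dotProduct_add]
  map_update_smul' := by
    intro _ v ⟨a, k₀⟩ c x
    simp only [prod_update_eq_mul_prod_erase fun x y => x ⬝ᵥ A *ᵥ y]
    fin_cases a <;> simp [mul_assoc, mulVec_smul]

theorem alternatization_pfaffianMultilinear_apply (A : Matrix (Fin 2 × κ) (Fin 2 × κ) R)
    (v : Fin 2 × κ → Fin 2 × κ → R) :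
    (pfaffianMultilinear A).alternatization v = pfaffianSum (of fun i j => v i ⬝ᵥ A *ᵥ v j) := by
  simp [MultilinearMap.alternatization_apply, pfaffianSum, pfaffianMultilinear]

theorem pfaffianSum_mul_mul_transpose (L A : Matrix (Fin 2 × κ) (Fin 2 × κ) R) :
    pfaffianSum (L * A * Lᵀ) = L.det * pfaffianSum A := by
  have hrows : ∀ M : Matrix (Fin 2 × κ) (Fin 2 × κ) R,
      pfaffianSum (M * A * Mᵀ) = (pfaffianMultilinear A).alternatization fun i => M i := by
    intro M
    rw [alternatization_pfaffianMultilinear_apply]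
    congr 1
    ext i j
    simp [mul_mul_apply]
  have hbasis :
      ⇑(Pi.basisFun R (Fin 2 × κ)) = fun i => (1 : Matrix (Fin 2 × κ) (Fin 2 × κ) R) i := by
    ext i j
    simp [one_eq_pi_single]
  rw [hrows, (pfaffianMultilinear A).alternatization.eq_smul_basis_det (Pi.basisFun R _),
    AlternatingMap.smul_apply, Pi.basisFun_det_apply, hbasis, ← hrows, smul_eq_mul, mul_comm,
    Matrix.one_mul, Matrix.transpose_one, Matrix.mul_one]
  rfl

theorem continuous_pfaffianSum [TopologicalSpace R] [IsTopologicalRing R] :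
    Continuous (pfaffianSum : Matrix (Fin 2 × κ) (Fin 2 × κ) R → R) := by
  unfold pfaffianSum
  fun_prop

end Pfaffian

section BlockDiagonal

variable [Fintype κ] [CommRing R]

def IsPairPreserving (σ : Perm (Fin 2 × κ)) : Prop :=
  ∀ k, (σ (0, k)).2 = (σ (1, k)).2

theorem IsPairPreserving.exists_eq_prodCongrRight_mul_prodCongrLeft {σ : Perm (Fin 2 × κ)}
    (hσ : IsPairPreserving σ) :
    ∃ (π : Perm κ) (s : κ → Perm (Fin 2)), σ = prodCongrRight (fun _ => π) * prodCongrLeft s := by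
  have hsnd : ∀ a k, (σ (a, k)).2 = (σ (0, k)).2 := by
    intro a k
    fin_cases a
    · rfl
    · exact (hσ k).symm
  have hs : ∀ k, Function.Injective fun a : Fin 2 => (σ (a, k)).1 := fun k a b h =>
    congrArg Prod.fst (σ.injective (Prod.ext h (by rw [hsnd, hsnd b])))
  have hπ : Function.Injective fun k => (σ (0, k)).2 := by
    intro k k' h
    obtain ⟨a, ha⟩ := Finite.surjective_of_injective (hs k) (σ (0, k')).1
    exact congrArg Prod.snd (σ.injective (Prod.ext ha (by rw [hsnd]; exact h)))
  refine ⟨.ofBijective _ (Finite.injective_iff_bijective.mp hπ),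
    fun k => .ofBijective _ (Finite.injective_iff_bijective.mp (hs k)), ?_⟩
  ext ⟨a, k⟩ <;> simp [hsnd]

omit [Fintype κ] in
theorem apply_perm_fin_two_of_transpose_eq_neg {A : Matrix (Fin 2 × κ) (Fin 2 × κ) R}
    (hA : Aᵀ = -A) (s : Perm (Fin 2)) (m : κ) :
    A (s 0, m) (s 1, m) = Perm.sign s • A (0, m) (1, m) := by
  rcases (by revert s; decide : ∀ s : Perm (Fin 2), s = 1 ∨ s = swap 0 1) s with rfl | rfl
  · simp
  · simpa using apply_swap_of_transpose_eq_neg hA (0, m) (1, m)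

variable [DecidableEq κ]

theorem IsPairPreserving.sign_smul_prod {A : Matrix (Fin 2 × κ) (Fin 2 × κ) R} (hA : Aᵀ = -A)
    {σ : Perm (Fin 2 × κ)} (hσ : IsPairPreserving σ) :
    Perm.sign σ • ∏ k, A (σ (0, k)) (σ (1, k)) = ∏ k, A (0, k) (1, k) := by
  obtain ⟨π, s, rfl⟩ := hσ.exists_eq_prodCongrRight_mul_prodCongrLeft
  have hsq : ∀ u : ℤˣ, ((u : ℤ) : R) * (u : ℤ) = 1 := by
    intro u
    rcases Int.units_eq_one_or u with rfl | rfl <;> simp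
  simp only [Perm.mul_apply, prodCongrLeft_apply, prodCongrRight_apply, Perm.sign_mul,
    Perm.sign_prodCongrLeft, Perm.sign_prodCongrRight, Fin.prod_univ_two, Int.units_mul_self,
    one_mul, apply_perm_fin_two_of_transpose_eq_neg hA, Units.smul_def, zsmul_eq_mul,
    Units.coe_prod, Int.cast_prod, ← mul_assoc, ← Finset.prod_mul_distrib, hsq]
  exact Equiv.prod_comp π fun k => A (0, k) (1, k)

theorem pfaffianSum_eq_card_smul_prod {A : Matrix (Fin 2 × κ) (Fin 2 × κ) R} (hA : Aᵀ = -A)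
    (hblock : ∀ i j, i.2 ≠ j.2 → A i j = 0) :
    pfaffianSum A = Nat.card {σ : Perm (Fin 2 × κ) // IsPairPreserving σ} •
      ∏ k, A (0, k) (1, k) := by
  classical
  have hterm : ∀ σ : Perm (Fin 2 × κ), Perm.sign σ • ∏ k, A (σ (0, k)) (σ (1, k)) =
      if IsPairPreserving σ then ∏ k, A (0, k) (1, k) else 0 := by
    intro σ
    split_ifs with hσ
    · exact hσ.sign_smul_prod hA
    · obtain ⟨k, hk⟩ : ∃ k, (σ (0, k)).2 ≠ (σ (1, k)).2 := by simpa [IsPairPreserving] using hσ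
      rw [Finset.prod_eq_zero (Finset.mem_univ k) (hblock _ _ hk), smul_zero]
  rw [pfaffianSum, Finset.sum_congr rfl fun σ _ => hterm σ, Finset.sum_ite, Finset.sum_const_zero,
    add_zero, Finset.sum_const, Nat.card_eq_fintype_card, Fintype.card_subtype]

omit [DecidableEq κ] in
theorem card_isPairPreserving_pos : 0 < Nat.card {σ : Perm (Fin 2 × κ) // IsPairPreserving σ} :=
  have : Nonempty {σ : Perm (Fin 2 × κ) // IsPairPreserving σ} := ⟨⟨1, fun _ => rfl⟩⟩
  Nat.card_pos

end BlockDiagonal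

section Darboux

variable [Fintype κ] [DecidableEq κ] [Field R] [CharZero R] {S : Matrix (Fin 2 × κ) (Fin 2 × κ) R}

def SplitsOffPair (S : Matrix (Fin 2 × κ) (Fin 2 × κ) R) (k : κ) : Prop :=
  ∀ a j, j.2 ≠ k → S (a, k) j = 0

omit [CharZero R] in
theorem exists_det_eq_one_apply_pair_ne_zero (hS : Sᵀ = -S) (hdet : S.det ≠ 0) {k : κ}
    (hk : S (0, k) (1, k) = 0) :
    ∃ L : Matrix (Fin 2 × κ) (Fin 2 × κ) R, L.det = 1 ∧ (L * S * Lᵀ) (0, k) (1, k) ≠ 0 ∧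
      ∀ k' ≠ k, SplitsOffPair S k' → SplitsOffPair (L * S * Lᵀ) k' := by
  obtain ⟨j, hj⟩ : ∃ j, S (0, k) j ≠ 0 := by
    by_contra! h
    exact hdet (det_eq_zero_of_row_eq_zero _ h)
  have hjv : j ≠ (1, k) := by
    rintro rfl
    exact hj hk
  have hrow : ∀ (a : Fin 2) k', k' ≠ k → (a, k') ≠ (1, k) := by simp +contextual
  refine ⟨transvection (1, k) j 1, det_transvection_of_ne _ _ hjv.symm 1, ?_, ?_⟩
  · rw [transpose_transvection, mul_transvection_apply_same,
      transvection_mul_apply_of_ne _ _ _ _ (by simp),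
      transvection_mul_apply_of_ne _ _ _ _ (by simp)]
    simpa [hk] using hj
  · intro k' hk' hsplit a x hx
    rw [transpose_transvection]
    by_cases hxv : x = (1, k)
    · subst hxv
      have hjk' : j.2 ≠ k' := by
        intro h
        apply hj
        rw [apply_swap_of_transpose_eq_neg hS, ← Prod.mk.eta (p := j), h,
          hsplit j.1 (0, k) (Ne.symm hk'), neg_zero]
      rw [mul_transvection_apply_same, transvection_mul_apply_of_ne _ _ _ _ (hrow a k' hk'),
        transvection_mul_apply_of_ne _ _ _ _ (hrow a k' hk'), hsplit _ _ hx, hsplit _ _ hjk',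
        mul_zero, add_zero]
    · rw [mul_transvection_apply_of_ne _ _ _ _ hxv,
        transvection_mul_apply_of_ne _ _ _ _ (hrow a k' hk'), hsplit _ _ hx]

theorem exists_det_eq_one_splitsOffPair_of_apply_ne_zero (hS : Sᵀ = -S) {k : κ}
    (hk : S (0, k) (1, k) ≠ 0) :
    ∃ L : Matrix (Fin 2 × κ) (Fin 2 × κ) R, L.det = 1 ∧ SplitsOffPair (L * S * Lᵀ) k ∧
      ∀ k' ≠ k, SplitsOffPair S k' → SplitsOffPair (L * S * Lᵀ) k' := by
  set u : Fin 2 × κ := (0, k)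
  set v : Fin 2 × κ := (1, k)
  set a := S u v
  -- For `i` outside the pair, row `i` of `addRowsMatrix c d u v` is the projection of `eᵢ` to the
  -- `S`-orthogonal complement of `e_u` and `e_v`.
  let c : Fin 2 × κ → R := fun i => if i.2 = k then 0 else -S i v / a
  let d : Fin 2 × κ → R := fun i => if i.2 = k then 0 else S i u / a
  have hcu : c u = 0 := if_pos rfl
  have hdu : d u = 0 := if_pos rfl
  have hcv : c v = 0 := if_pos rfl
  have hdv : d v = 0 := if_pos rfl
  have huu : S u u = 0 := apply_self_of_transpose_eq_neg hS u
  have hvv : S v v = 0 := apply_self_of_transpose_eq_neg hS v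
  have hvu : S v u = -a := apply_swap_of_transpose_eq_neg hS u v
  have hentry := addRowsMatrix_mul_mul_transpose_apply c d u v S
  refine ⟨addRowsMatrix c d u v, det_addRowsMatrix hcu hcv hdv, ?_, ?_⟩
  · intro b x hx
    have hc : c x = -S x v / a := if_neg hx
    have hd : d x = S x u / a := if_neg hx
    match b with
    | 0 =>
      change (addRowsMatrix c d u v * S * (addRowsMatrix c d u v)ᵀ) u x = 0
      rw [hentry, hcu, hdu, hc, hd, huu, apply_swap_of_transpose_eq_neg hS x u]
      field_simp
      ring
    | 1 =>
      change (addRowsMatrix c d u v * S * (addRowsMatrix c d u v)ᵀ) v x = 0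
      rw [hentry, hcv, hdv, hc, hd, hvv, hvu, apply_swap_of_transpose_eq_neg hS x v]
      field_simp
      ring
  · intro k' hk' hsplit b x hx
    have hu : S (b, k') u = 0 := hsplit b u hk'.symm
    have hv : S (b, k') v = 0 := hsplit b v hk'.symm
    have hc : c (b, k') = 0 := by simp [c, hv]
    have hd : d (b, k') = 0 := by simp [d, hu]
    rw [hentry, hc, hd, hu, hv, hsplit b x hx]
    ring

theorem exists_det_eq_one_splitsOffPair (hS : Sᵀ = -S) (hdet : S.det ≠ 0) (k : κ) :
    ∃ L : Matrix (Fin 2 × κ) (Fin 2 × κ) R, L.det = 1 ∧ SplitsOffPair (L * S * Lᵀ) k ∧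
      ∀ k' ≠ k, SplitsOffPair S k' → SplitsOffPair (L * S * Lᵀ) k' := by
  by_cases hk : S (0, k) (1, k) = 0
  · obtain ⟨L₁, hL₁, hne, hpres₁⟩ := exists_det_eq_one_apply_pair_ne_zero hS hdet hk
    obtain ⟨L₂, hL₂, hsplit, hpres₂⟩ := exists_det_eq_one_splitsOffPair_of_apply_ne_zero
      (transpose_mul_mul_transpose_eq_neg hS L₁) hne
    refine ⟨L₂ * L₁, by rw [det_mul, hL₁, hL₂, one_mul], ?_, fun k' hk' h => ?_⟩
    · rwa [← mul_mul_transpose_mul_mul_transpose]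
    · rw [← mul_mul_transpose_mul_mul_transpose]
      exact hpres₂ k' hk' (hpres₁ k' hk' h)
  · exact exists_det_eq_one_splitsOffPair_of_apply_ne_zero hS hk

theorem exists_det_eq_one_blockDiagonal (hS : Sᵀ = -S) (hdet : S.det ≠ 0) :
    ∃ L : Matrix (Fin 2 × κ) (Fin 2 × κ) R, L.det = 1 ∧
      ∀ i j, i.2 ≠ j.2 → (L * S * Lᵀ) i j = 0 := by
  suffices ∀ T : Finset κ, ∃ L : Matrix (Fin 2 × κ) (Fin 2 × κ) R, L.det = 1 ∧
      ∀ k ∈ T, SplitsOffPair (L * S * Lᵀ) k by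
    obtain ⟨L, hL, hsplit⟩ := this Finset.univ
    exact ⟨L, hL, fun i j hij => hsplit i.2 (Finset.mem_univ _) i.1 j (Ne.symm hij)⟩
  intro T
  induction T using Finset.induction_on with
  | empty => exact ⟨1, det_one, by simp⟩
  | insert k T _ ih =>
    obtain ⟨L, hL, hT⟩ := ih
    obtain ⟨L', hL', hk, hpres⟩ := exists_det_eq_one_splitsOffPair
      (transpose_mul_mul_transpose_eq_neg hS L) (by simpa [hL] using hdet) k
    refine ⟨L' * L, by rw [det_mul, hL, hL', one_mul], fun k' hk' => ?_⟩
    rw [← mul_mul_transpose_mul_mul_transpose]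
    rcases eq_or_ne k' k with rfl | hne
    · exact hk
    · exact hpres k' hne (hT k' ((Finset.mem_insert.mp hk').resolve_left hne))

theorem pfaffianSum_ne_zero (hS : Sᵀ = -S) (hdet : S.det ≠ 0) : pfaffianSum S ≠ 0 := by
  obtain ⟨L, hL, hblock⟩ := exists_det_eq_one_blockDiagonal hS hdet
  set S' := L * S * Lᵀ
  have hS' : S'ᵀ = -S' := transpose_mul_mul_transpose_eq_neg hS L
  have hdet' : S'.det ≠ 0 := by simpa [S', hL] using hdet
  have hpair : ∀ k, S' (0, k) (1, k) ≠ 0 := by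
    intro k h
    refine hdet' (det_eq_zero_of_row_eq_zero (0, k) fun j => ?_)
    by_cases hj : j.2 = k
    · obtain ⟨b, j⟩ := j
      subst hj
      fin_cases b
      · exact apply_self_of_transpose_eq_neg hS' _
      · exact h
    · exact hblock _ _ (Ne.symm hj)
  have hpf : pfaffianSum S = pfaffianSum S' := by
    rw [pfaffianSum_mul_mul_transpose, hL, one_mul]
  rw [hpf, pfaffianSum_eq_card_smul_prod hS' hblock]
  exact smul_ne_zero card_isPairPreserving_pos.ne' (Finset.prod_ne_zero_iff.mpr fun k _ => hpair k)

end Darboux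

def pairEquiv (n : ℕ) : Fin 2 × Fin n ≃ Fin (2 * n) :=
  (prodComm _ _).trans (finProdFinEquiv.trans (finCongr (Nat.mul_comm n 2)))

theorem pairEquiv_val {n : ℕ} (p : Fin 2 × Fin n) : (pairEquiv n p : ℕ) = p.1 + 2 * p.2 := rfl

theorem transpose_submatrix_pairEquiv {n : ℕ} {X : Matrix (Fin (2 * n)) (Fin (2 * n)) ℝ}
    (hX : Xᵀ = -X) :
    (X.submatrix (pairEquiv n) (pairEquiv n))ᵀ = -(X.submatrix (pairEquiv n) (pairEquiv n)) := by
  rw [transpose_submatrix, hX]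
  rfl

theorem Jpos_apply_swap (n : ℕ) (i j : Fin (2 * n)) : Jpos n j i = -Jpos n i j := by
  simp only [Jpos, of_apply]
  split_ifs <;> first | omega | norm_num

theorem Jpos_transpose (n : ℕ) : (Jpos n)ᵀ = -Jpos n := by
  ext i j
  exact Jpos_apply_swap n i j

theorem Jneg_transpose (n : ℕ) : (Jneg n)ᵀ = -Jneg n := by
  ext i j
  simp only [transpose_apply, Matrix.neg_apply, Jneg, of_apply, Jpos_apply_swap n i j]
  split_ifs <;> first | omega | simp

theorem Jpos_pairEquiv_apply_of_ne {n : ℕ} (a b : Fin 2) {k k' : Fin n} (h : k ≠ k') :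
    Jpos n (pairEquiv n (a, k)) (pairEquiv n (b, k')) = 0 := by
  have := Fin.val_ne_of_ne h
  have := a.isLt
  have := b.isLt
  have hi : (pairEquiv n (a, k) : ℕ) = a + 2 * k := rfl
  have hj : (pairEquiv n (b, k') : ℕ) = b + 2 * k' := rfl
  simp only [Jpos, of_apply]
  split_ifs <;> first | rfl | omega

theorem Jneg_pairEquiv_apply_of_ne {n : ℕ} (a b : Fin 2) {k k' : Fin n} (h : k ≠ k') :
    Jneg n (pairEquiv n (a, k)) (pairEquiv n (b, k')) = 0 := by
  simp only [Jneg, of_apply, Jpos_pairEquiv_apply_of_ne a b h, neg_zero, ite_self]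

theorem Jpos_pairEquiv_apply {n : ℕ} (k : Fin n) :
    Jpos n (pairEquiv n (0, k)) (pairEquiv n (1, k)) = 1 := by
  have hi : (pairEquiv n (0, k) : ℕ) = 2 * k := by simp [pairEquiv_val]
  have hj : (pairEquiv n (1, k) : ℕ) = 2 * k + 1 := by simp [pairEquiv_val]; ring
  simp only [Jpos, of_apply]
  rw [if_pos (by omega)]

theorem Jneg_pairEquiv_apply {n : ℕ} (k : Fin n) :
    Jneg n (pairEquiv n (0, k)) (pairEquiv n (1, k)) = if (k : ℕ) = 0 then -1 else 1 := by
  have hi : (pairEquiv n (0, k) : ℕ) = 2 * k := by simp [pairEquiv_val]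
  have hj : (pairEquiv n (1, k) : ℕ) = 2 * k + 1 := by simp [pairEquiv_val]; ring
  simp only [Jneg, of_apply, Jpos_pairEquiv_apply]
  split_ifs <;> first | rfl | omega

theorem pfaffianSum_submatrix_Jpos (n : ℕ) :
    pfaffianSum ((Jpos n).submatrix (pairEquiv n) (pairEquiv n)) =
      Nat.card {σ : Perm (Fin 2 × Fin n) // IsPairPreserving σ} := by
  rw [pfaffianSum_eq_card_smul_prod (transpose_submatrix_pairEquiv (Jpos_transpose n))
    fun ⟨a, k⟩ ⟨b, k'⟩ h => Jpos_pairEquiv_apply_of_ne a b h]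
  simp [Jpos_pairEquiv_apply]

theorem pfaffianSum_submatrix_Jneg {n : ℕ} (hn : 0 < n) :
    pfaffianSum ((Jneg n).submatrix (pairEquiv n) (pairEquiv n)) =
      -Nat.card {σ : Perm (Fin 2 × Fin n) // IsPairPreserving σ} := by
  rw [pfaffianSum_eq_card_smul_prod (transpose_submatrix_pairEquiv (Jneg_transpose n))
    fun ⟨a, k⟩ ⟨b, k'⟩ h => Jneg_pairEquiv_apply_of_ne a b h]
  simp only [submatrix_apply, Jneg_pairEquiv_apply]
  rw [Finset.prod_eq_single ⟨0, hn⟩ (fun k _ hk => if_neg fun h => hk (Fin.ext h)) (by simp)]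
  simp

theorem Jpos_not_joined_Jneg (n : ℕ) (hn : 0 < n) :
    ¬ JoinedIn {X : Matrix (Fin (2*n)) (Fin (2*n)) ℝ | Xᵀ = -X ∧ X.det ≠ 0}
      (Jpos n) (Jneg n) := by
  rintro ⟨γ, hγ⟩
  let f : unitInterval → ℝ := fun t => pfaffianSum ((γ t).submatrix (pairEquiv n) (pairEquiv n))
  have hf : Continuous f := continuous_pfaffianSum.comp (γ.continuous.matrix_submatrix _ _)
  have hf0 : f 0 = Nat.card {σ : Perm (Fin 2 × Fin n) // IsPairPreserving σ} := by
    simp [f, pfaffianSum_submatrix_Jpos]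
  have hf1 : f 1 = -Nat.card {σ : Perm (Fin 2 × Fin n) // IsPairPreserving σ} := by
    simp [f, pfaffianSum_submatrix_Jneg hn]
  have hsign : (0 : ℝ) ∈ Set.Icc (f 1) (f 0) := by
    rw [hf0, hf1]
    constructor <;> simp
  obtain ⟨t, ht⟩ := intermediate_value_univ 1 0 hf hsign
  exact pfaffianSum_ne_zero (transpose_submatrix_pairEquiv (hγ t).1)
    (by rw [det_submatrix_equiv_self]; exact (hγ t).2) ht
end

section
/- Every skew-symmetric matrix S over the reals admits a factorization S = L T L^T where L is an invertible lower-triangular matrix and T is skew-symmetric tridiagonal (possibly after a permutation P: P S P^T = L T L^T). -/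
/-!
Parlett–Reid elimination. Sweep the columns of `S` from left to right, maintaining
`S.submatrix τ τ = L * M * Lᵀ`. At column `j`, a transposition of two indices `> j` brings a
nonzero entry below the subdiagonal into row `j + 1` (if there is none, the column is already
reduced), and the congruence with the Gauss transform `1 + l e_{j+1}ᵀ`, where `l` is supported on
rows `> j + 1`, clears the rest of the column. Neither step touches the columns `< j` already
reduced, and since `L` is still the identity beyond column `j`, both steps keep it unit lower
triangular. After all columns, `M` vanishes below its subdiagonal and is skew-symmetric, hence
tridiagonal.
-/

open Matrix

namespace Matrix

variable {n R : Type*} [Fintype n] [DecidableEq n]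

theorem of_perm_mul_mul_transpose [CommSemiring R] (σ : Equiv.Perm n) (A : Matrix n n R) :
    of (fun i j => if σ j = i then (1 : R) else 0) * A *
      (of (fun i j => if σ j = i then (1 : R) else 0))ᵀ = A.submatrix σ.symm σ.symm := by
  have hP : of (fun i j => if σ j = i then (1 : R) else 0) = σ.symm.toPEquiv.toMatrix := by
    ext i j
    simp [Equiv.symm_apply_eq, @eq_comm _ (σ j)]
  rw [hP, ← PEquiv.toMatrix_symm, ← Equiv.toPEquiv_symm, PEquiv.toMatrix_toPEquiv_mul,
    PEquiv.mul_toMatrix_toPEquiv, submatrix_submatrix]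
  rfl

theorem sub_vecMulVec_mul_one_add_vecMulVec [CommRing R] {L : Matrix n n R} {l e : n → R}
    (hL : L *ᵥ l = l) (he : e ⬝ᵥ l = 0) :
    (L - vecMulVec l e) * (1 + vecMulVec l e) = L := by
  rw [sub_mul, mul_add, mul_add, mul_vecMulVec, vecMulVec_mul_vecMulVec, he, hL]
  simp

theorem one_add_vecMulVec_single_mul_mul_transpose_apply [CommRing R] (l : n → R) (q : n)
    (M : Matrix n n R) {i c : n} (hc : l c = 0) :
    ((1 + vecMulVec l (Pi.single q 1)) * M * (1 + vecMulVec l (Pi.single q 1))ᵀ :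
      Matrix n n R) i c = M i c + l i * M q c := by
  rw [transpose_add, transpose_one, transpose_vecMulVec, mul_add, mul_one, mul_vecMulVec,
    add_mul, one_mul, vecMulVec_mul, single_one_vecMul]
  simp [vecMulVec_apply, hc]

end Matrix

variable {K : Type*} [Field K] {k : ℕ}

theorem Equiv.Perm.lt_val_apply_of_fixes_le {π : Equiv.Perm (Fin k)} {j : ℕ}
    (hπ : ∀ x : Fin k, x.val ≤ j → π x = x) {x : Fin k} (hx : j < x.val) :
    j < (π x).val := by
  by_contra! h
  have hfix : π (π x) = π x := hπ (π x) h
  rw [π.injective hfix] at h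
  omega

/-- The state of the Parlett–Reid sweep after its first `j` columns. -/
structure IsPartialLTLT (S : Matrix (Fin k) (Fin k) K) (j : ℕ) (τ : Equiv.Perm (Fin k))
    (L M : Matrix (Fin k) (Fin k) K) : Prop where
  factor : S.submatrix τ τ = L * M * Lᵀ
  lower : ∀ i c, i < c → L i c = 0
  diag : ∀ i, L i i = 1
  col_eq_one : ∀ i c : Fin k, j < c.val → L i c = (1 : Matrix (Fin k) (Fin k) K) i c
  skew : Mᵀ = -M
  reduced : ∀ i c : Fin k, c.val < j → c.val + 1 < i.val → M i c = 0

namespace IsPartialLTLT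

variable {S L M : Matrix (Fin k) (Fin k) K} {j : ℕ} {τ : Equiv.Perm (Fin k)}

theorem submatrix_perm (h : IsPartialLTLT S j τ L M) {π : Equiv.Perm (Fin k)}
    (hπ : ∀ x : Fin k, x.val ≤ j → π x = x) :
    IsPartialLTLT S j (π.trans τ) (L.submatrix π π) (M.submatrix π π) where
  factor := by
    rw [Equiv.coe_trans, ← submatrix_submatrix, h.factor, transpose_submatrix,
      submatrix_mul_equiv, submatrix_mul_equiv]
  lower x y hxy := by
    by_cases hy : y.val ≤ j
    · rw [submatrix_apply, hπ y hy, hπ x (by omega)]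
      exact h.lower x y hxy
    · rw [submatrix_apply, h.col_eq_one _ _ (π.lt_val_apply_of_fixes_le hπ (by omega)),
        one_apply_ne (π.injective.ne hxy.ne)]
  diag x := h.diag (π x)
  col_eq_one x y hy := by
    rw [submatrix_apply, h.col_eq_one _ _ (π.lt_val_apply_of_fixes_le hπ hy),
      one_apply, one_apply]
    simp only [π.injective.eq_iff]
  skew := by rw [transpose_submatrix, h.skew]; rfl
  reduced x c hc hx := by
    rw [submatrix_apply, hπ c hc.le]
    by_cases hxj : x.val ≤ j
    · rw [hπ x hxj]
      exact h.reduced x c hc hx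
    · exact h.reduced _ c hc (by have := π.lt_val_apply_of_fixes_le hπ (not_le.mp hxj); omega)

theorem succ_of_col_reduced (h : IsPartialLTLT S j τ L M)
    (hcol : ∀ i c : Fin k, c.val = j → c.val + 1 < i.val → M i c = 0) :
    IsPartialLTLT S (j + 1) τ L M where
  factor := h.factor
  lower := h.lower
  diag := h.diag
  col_eq_one i c hc := h.col_eq_one i c (by omega)
  skew := h.skew
  reduced i c hc hi := by
    rcases Nat.lt_succ_iff_lt_or_eq.mp hc with hc | hc
    · exact h.reduced i c hc hi
    · exact hcol i c hc hi

theorem eliminate (h : IsPartialLTLT S j τ L M) {q c : Fin k} (hq : q.val = j + 1)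
    (hc : c.val = j) (hpiv : M q c ≠ 0) :
    ∃ L' M', IsPartialLTLT S (j + 1) τ L' M' := by
  set l : Fin k → K := fun i => if q < i then -(M i c / M q c) else 0 with hl_def
  set E : Matrix (Fin k) (Fin k) K := 1 + vecMulVec l (Pi.single q 1)
  have hl_low : ∀ x : Fin k, x.val ≤ j + 1 → l x = 0 := fun x hx =>
    if_neg (by rw [Fin.lt_def]; omega)
  have hLl : L *ᵥ l = l := calc
    L *ᵥ l = (1 : Matrix (Fin k) (Fin k) K) *ᵥ l := by
      ext i
      simp only [mulVec, dotProduct]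
      refine Finset.sum_congr rfl fun t _ => ?_
      by_cases ht : t.val ≤ j + 1
      · simp only [hl_low t ht, mul_zero]
      · rw [h.col_eq_one i t (by omega)]
    _ = l := one_mulVec l
  have hE : (L - vecMulVec l (Pi.single q 1)) * E = L :=
    sub_vecMulVec_mul_one_add_vecMulVec hLl
      (by rw [single_one_dotProduct, hl_low q hq.le])
  have hM' : ∀ i x, l x = 0 → (E * M * Eᵀ) i x = M i x + l i * M q x := fun i x hx =>
    one_add_vecMulVec_single_mul_mul_transpose_apply l q M hx
  refine ⟨L - vecMulVec l (Pi.single q 1), E * M * Eᵀ, ?_, ?_, ?_, ?_, ?_, ?_⟩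
  · rw [h.factor]
    conv_lhs => rw [← hE]
    rw [transpose_mul]
    simp only [Matrix.mul_assoc]
  · intro i x hix
    by_cases hxq : x = q
    · subst hxq
      rw [Matrix.sub_apply, vecMulVec_apply, h.lower i _ hix, hl_low i (by omega), zero_mul,
        sub_zero]
    · rw [Matrix.sub_apply, vecMulVec_apply, h.lower i x hix, Pi.single_eq_of_ne hxq, mul_zero,
        sub_zero]
  · intro i
    by_cases hiq : i = q
    · subst hiq
      rw [Matrix.sub_apply, vecMulVec_apply, h.diag, hl_low _ hq.le, zero_mul, sub_zero]
    · rw [Matrix.sub_apply, vecMulVec_apply, h.diag, Pi.single_eq_of_ne hiq, mul_zero, sub_zero]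
  · intro i x hx
    have hxq : x ≠ q := fun hxq => by rw [hxq] at hx; omega
    rw [Matrix.sub_apply, vecMulVec_apply, h.col_eq_one i x (by omega), Pi.single_eq_of_ne hxq,
      mul_zero, sub_zero]
  · rw [transpose_mul, transpose_mul, transpose_transpose, h.skew, Matrix.neg_mul,
      Matrix.mul_neg, Matrix.mul_assoc]
  · intro i x hx hi
    rw [hM' i x (hl_low x (by omega))]
    rcases Nat.lt_succ_iff_lt_or_eq.mp hx with hx | hx
    · rw [h.reduced i x hx hi, h.reduced q x hx (by omega), mul_zero, add_zero]
    · have hxc : x = c := Fin.ext (hx.trans hc.symm)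
      subst hxc
      have hqi : q < i := by rw [Fin.lt_def]; omega
      simp only [hl_def, hqi, if_true]
      field_simp
      ring

theorem exists_succ (h : IsPartialLTLT S j τ L M) :
    ∃ τ' L' M', IsPartialLTLT S (j + 1) τ' L' M' := by
  by_cases hcol : ∀ i c : Fin k, c.val = j → c.val + 1 < i.val → M i c = 0
  · exact ⟨τ, L, M, h.succ_of_col_reduced hcol⟩
  push Not at hcol
  obtain ⟨p, c, hc, hp, hpiv⟩ := hcol
  let q : Fin k := ⟨j + 1, by omega⟩
  have hfix : ∀ x : Fin k, x.val ≤ j → Equiv.swap p q x = x := fun x hx =>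
    Equiv.swap_apply_of_ne_of_ne (Fin.ne_of_val_ne (by omega))
      (Fin.ne_of_val_ne (by change x.val ≠ j + 1; omega))
  have hpiv' : M.submatrix (Equiv.swap p q) (Equiv.swap p q) q c ≠ 0 := by
    rwa [submatrix_apply, Equiv.swap_apply_right, hfix c hc.le]
  obtain ⟨L', M', h'⟩ := (h.submatrix_perm hfix).eliminate rfl hc hpiv'
  exact ⟨_, L', M', h'⟩

theorem tridiagonal (h : IsPartialLTLT S j τ L M) (hj : k ≤ j) :
    ∀ i c : Fin k, i.val + 1 < c.val ∨ c.val + 1 < i.val → M i c = 0 := by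
  rintro i c (hic | hci)
  · rw [← neg_neg (M i c), ← neg_apply, ← h.skew, transpose_apply,
      h.reduced c i (by omega) hic, neg_zero]
  · exact h.reduced i c (by omega) hci

end IsPartialLTLT

theorem exists_isPartialLTLT {S : Matrix (Fin k) (Fin k) K} (hS : Sᵀ = -S) (j : ℕ) :
    ∃ τ L M, IsPartialLTLT S j τ L M := by
  induction j with
  | zero =>
    refine ⟨1, 1, S, ?_, fun i c hic => one_apply_ne hic.ne, fun i => one_apply_eq i,
      fun _ _ _ => rfl, hS, fun _ _ hc => absurd hc (Nat.not_lt_zero _)⟩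
    simp
  | succ j ih =>
    obtain ⟨τ, L, M, h⟩ := ih
    exact h.exists_succ

/-- Every real skew-symmetric matrix `S` admits (possibly after a permutation
`P`) a factorization `P S Pᵀ = L T Lᵀ` with `L` invertible lower-triangular and
`T` skew-symmetric tridiagonal. -/
theorem skew_LTL_factorization (n : ℕ)
    (S : Matrix (Fin (2*n)) (Fin (2*n)) ℝ) (hS : Sᵀ = -S) :
    ∃ (σ : Equiv.Perm (Fin (2*n))) (P L T : Matrix (Fin (2*n)) (Fin (2*n)) ℝ),
      P = Matrix.of (fun i j => if σ j = i then (1 : ℝ) else 0) ∧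
      (∀ i j : Fin (2*n), i < j → L i j = 0) ∧
      (∀ i : Fin (2*n), L i i ≠ 0) ∧
      Tᵀ = -T ∧
      (∀ i j : Fin (2*n), i.1 + 1 < j.1 ∨ j.1 + 1 < i.1 → T i j = 0) ∧
      P * S * Pᵀ = L * T * Lᵀ := by
  obtain ⟨τ, L, T, h⟩ := exists_isPartialLTLT hS (2 * n)
  refine ⟨τ.symm, _, L, T, rfl, h.lower, fun i => by simp [h.diag i], h.skew,
    h.tridiagonal le_rfl, ?_⟩
  rw [of_perm_mul_mul_transpose, Equiv.symm_symm, h.factor]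
end

section
/- For a skew-symmetric 2n-by-2n real matrix S with factorization P S P^T = L T L^T, where P is a permutation matrix, L is lower-triangular with nonzero diagonal, and T is skew-symmetric tridiagonal with superdiagonal entries t_1,...,t_{2n-1}, the sign of the Pfaffian of S equals sign(det P) · ∏_j sign(L_{jj}) · ∏_{j=1}^{n} sign(t_{2j-1}). -/
/-!
Both `Pf (M * X * Mᵀ)` and `det M * Pf X` (for fixed skew `X`), and likewise `Pf (triSkew t)` and
`∏ t (2j+1)`, are polynomial functions of the free entries whose squares agree because
`Pf ^ 2 = det` on skew matrices. Over `ℝ` the polynomials are then equal up to a global sign,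
which is fixed by evaluating at `M = 1` (if `Pf X = 0` both sides vanish anyway), resp. at the
`t` with `triSkew t = Jpos n`.
Since the permutation matrix `P` is orthogonal, `S = (Pᵀ L) T (Pᵀ L)ᵀ`, so
`Pf S = det P * ∏ L j j * ∏ t (2j+1)`, and the sign is multiplicative.
-/

open Matrix

/-- `Pf` is the Pfaffian on 2n×2n real matrices: a polynomial (with integer
coefficients) in the matrix entries, whose square is the determinant on
skew-symmetric matrices, normalized by `Pf (Jpos n) = 1`. -/
def IsPfaffian (n : ℕ) (Pf : Matrix (Fin (2*n)) (Fin (2*n)) ℝ → ℝ) : Prop :=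
  (∃ p : MvPolynomial (Fin (2*n) × Fin (2*n)) ℤ,
      ∀ X : Matrix (Fin (2*n)) (Fin (2*n)) ℝ,
        Pf X = MvPolynomial.aeval (fun ij => X ij.1 ij.2) p) ∧
  (∀ X : Matrix (Fin (2*n)) (Fin (2*n)) ℝ, Xᵀ = -X → (Pf X)^2 = X.det) ∧
  Pf (Jpos n) = 1


/-- The 2n×2n tridiagonal skew-symmetric matrix with superdiagonal entries
`T_{i,i+1} = t i` (1-indexed) and subdiagonal entries `-t i`. -/
def triSkew (n : ℕ) (t : ℕ → ℝ) : Matrix (Fin n) (Fin n) ℝ :=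
  Matrix.of fun i j =>
    if j.1 = i.1 + 1 then t (i.1 + 1)
    else if i.1 = j.1 + 1 then -(t (j.1 + 1)) else 0


namespace Real

theorem sign_mul (x y : ℝ) : sign (x * y) = sign x * sign y := by
  rcases lt_trichotomy x 0 with hx | hx | hx <;>
  rcases lt_trichotomy y 0 with hy | hy | hy <;>
  simp [sign_of_neg, sign_of_pos, sign_zero, hx, hy, mul_pos_of_neg_of_neg,
    mul_neg_of_neg_of_pos, mul_neg_of_pos_of_neg]

theorem sign_prod {ι : Type*} (s : Finset ι) (f : ι → ℝ) :
    sign (∏ i ∈ s, f i) = ∏ i ∈ s, sign (f i) :=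
  map_prod ({ toFun := sign, map_one' := sign_one, map_mul' := sign_mul } : ℝ →* ℝ) f s

end Real

def mvPolynomialFunctions (R σ : Type*) [CommSemiring R] : Subalgebra R ((σ → R) → R) :=
  Algebra.adjoin R (Set.range fun i x => x i)

section CommSemiring

variable {R σ ι : Type*} [CommSemiring R]

theorem apply_mem_mvPolynomialFunctions (i : σ) :
    (fun x : σ → R => x i) ∈ mvPolynomialFunctions R σ :=
  Algebra.subset_adjoin ⟨i, rfl⟩

theorem const_mem_mvPolynomialFunctions (c : R) :
    (fun _ : σ → R => c) ∈ mvPolynomialFunctions R σ :=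
  Subalgebra.algebraMap_mem _ c

theorem exists_eq_eval_of_mem_mvPolynomialFunctions {f : (σ → R) → R}
    (hf : f ∈ mvPolynomialFunctions R σ) :
    ∃ p : MvPolynomial σ R, ∀ x, f x = MvPolynomial.eval x p := by
  rw [mvPolynomialFunctions, ← MvPolynomial.aeval_range] at hf
  obtain ⟨p, rfl⟩ := hf
  exact ⟨p, fun x => MvPolynomial.comp_aeval_apply _ (Pi.evalAlgHom R (fun _ => R) x) p⟩

theorem mul_apply_mem_mvPolynomialFunctions [Fintype ι] {A B : (σ → R) → Matrix ι ι R}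
    (hA : ∀ i j, (fun x => A x i j) ∈ mvPolynomialFunctions R σ)
    (hB : ∀ i j, (fun x => B x i j) ∈ mvPolynomialFunctions R σ) (i j : ι) :
    (fun x => (A x * B x) i j) ∈ mvPolynomialFunctions R σ := by
  have h : (fun x => (A x * B x) i j) = ∑ k, (fun x => A x i k) * fun x => B x k j := by
    ext x; simp [Matrix.mul_apply]
  rw [h]
  exact Subalgebra.sum_mem _ fun k _ => Subalgebra.mul_mem _ (hA i k) (hB k j)

end CommSemiring

section CommRing

variable {R σ ι : Type*} [CommRing R]

theorem aeval_mem_mvPolynomialFunctions {κ : Type*}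
    (p : MvPolynomial κ ℤ) {g : κ → (σ → R) → R}
    (hg : ∀ k, g k ∈ mvPolynomialFunctions R σ) :
    (fun x => MvPolynomial.aeval (fun k => g k x) p) ∈ mvPolynomialFunctions R σ := by
  have h : (fun x => MvPolynomial.aeval (fun k => g k x) p) = MvPolynomial.aeval g p :=
    funext fun x => (MvPolynomial.comp_aeval_apply _ (Pi.evalAlgHom ℤ (fun _ => R) x) p).symm
  rw [h]
  exact MvPolynomial.eval₂_mem (fun _ _ => by simp [intCast_mem]) hg

theorem det_mem_mvPolynomialFunctions [Fintype ι] [DecidableEq ι]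
    {A : (σ → R) → Matrix ι ι R}
    (hA : ∀ i j, (fun x => A x i j) ∈ mvPolynomialFunctions R σ) :
    (fun x => (A x).det) ∈ mvPolynomialFunctions R σ := by
  have h : (fun x => (A x).det) = fun x => MvPolynomial.aeval (fun ij : ι × ι => A x ij.1 ij.2)
      (Matrix.mvPolynomialX ι ι ℤ).det := by
    ext x
    rw [AlgHom.map_det, Matrix.mvPolynomialX_mapMatrix_aeval]
  rw [h]
  exact aeval_mem_mvPolynomialFunctions _ fun ij => hA ij.1 ij.2

theorem eq_of_sq_eq_of_mem_mvPolynomialFunctions [IsDomain R] [CharZero R]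
    {f g : (σ → R) → R} (hf : f ∈ mvPolynomialFunctions R σ)
    (hg : g ∈ mvPolynomialFunctions R σ) (hsq : ∀ x, f x ^ 2 = g x ^ 2) {x₀ : σ → R}
    (h₀ : f x₀ = g x₀) (hne : g x₀ ≠ 0) : f = g := by
  obtain ⟨p, hp⟩ := exists_eq_eval_of_mem_mvPolynomialFunctions hf
  obtain ⟨q, hq⟩ := exists_eq_eval_of_mem_mvPolynomialFunctions hg
  have hpq : p ^ 2 = q ^ 2 := MvPolynomial.funext fun x => by simpa [hp, hq] using hsq x
  rcases sq_eq_sq_iff_eq_or_eq_neg.mp hpq with rfl | rfl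
  · exact funext fun x => by rw [hp, hq]
  · refine absurd ?_ hne
    rw [hp, hq, map_neg] at h₀
    rw [hq]
    exact self_eq_neg.mp h₀.symm

end CommRing

namespace Matrix

theorem det_eq_neg_mul_det_submatrix_succ_succ {R : Type*} [CommRing R] {m : ℕ}
    (A : Matrix (Fin (m + 2)) (Fin (m + 2)) R) (hrow : ∀ j, j ≠ 1 → A 0 j = 0)
    (hcol : ∀ i, i ≠ 1 → A i 0 = 0) :
    A.det = -(A 0 1 * A 1 0) *
      (A.submatrix (Fin.succ ∘ Fin.succ) (Fin.succ ∘ Fin.succ)).det := by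
  set B := A.submatrix Fin.succ (Fin.succAbove 1)
  have hA : A.det = -(A 0 1 * B.det) := by
    rw [det_succ_row_zero, Fintype.sum_eq_single 1 fun j hj => by simp [hrow j hj]]
    simp [B]
  have hB : B.det = A 1 0 * (B.submatrix Fin.succ Fin.succ).det := by
    rw [det_succ_column_zero, Fintype.sum_eq_single 0 fun i hi => ?_]
    · simp [B]
    have hi' : i.succ ≠ 1 := fun h =>
      hi (Fin.succ_injective _ (by rw [h, Fin.succ_zero_eq_one]))
    simp [B, hcol _ hi']
  have hsucc : Fin.succAbove 1 ∘ Fin.succ = Fin.succ ∘ (Fin.succ : Fin m → Fin (m + 1)) :=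
    funext Fin.one_succAbove_succ
  rw [hA, hB, submatrix_submatrix, hsucc]
  ring

end Matrix

theorem triSkew_transpose (m : ℕ) (t : ℕ → ℝ) : (triSkew m t)ᵀ = -triSkew m t := by
  ext i j
  simp only [triSkew, transpose_apply, Matrix.neg_apply, of_apply]
  split_ifs <;> first | (exfalso; omega) | ring

theorem triSkew_submatrix_succ_succ (m : ℕ) (t : ℕ → ℝ) :
    (triSkew (m + 2) t).submatrix (Fin.succ ∘ Fin.succ) (Fin.succ ∘ Fin.succ) =
      triSkew m fun k => t (k + 2) := by
  ext i j
  simp only [triSkew, submatrix_apply, of_apply, Function.comp_apply, Fin.val_succ]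
  split_ifs <;> first | (exfalso; omega) | rfl

theorem det_triSkew (n : ℕ) (t : ℕ → ℝ) :
    (triSkew (2 * n) t).det = ∏ j ∈ Finset.range n, t (2 * j + 1) ^ 2 := by
  induction n generalizing t with
  | zero => simp
  | succ n ih =>
    have hrow : ∀ j, j ≠ 1 → triSkew (2 * n + 2) t 0 j = 0 := fun j hj => by
      have hj : (j : ℕ) ≠ 1 := by simpa [Fin.ext_iff] using hj
      simp only [triSkew, of_apply]
      rw [if_neg (by simp; omega), if_neg (by simp)]
    have hcol : ∀ i, i ≠ 1 → triSkew (2 * n + 2) t i 0 = 0 := fun i hi => by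
      have hi : (i : ℕ) ≠ 1 := by simpa [Fin.ext_iff] using hi
      simp only [triSkew, of_apply]
      rw [if_neg (by simp), if_neg (by simp; omega)]
    rw [show 2 * (n + 1) = 2 * n + 2 from rfl, det_eq_neg_mul_det_submatrix_succ_succ _ hrow hcol,
      triSkew_submatrix_succ_succ, ih, Finset.prod_range_succ']
    simp [triSkew, show ∀ j, 2 * j + 1 + 2 = 2 * (j + 1) + 1 from fun j => by ring]
    ring

theorem triSkew_eq_Jpos (n : ℕ) :
    triSkew (2 * n) (fun k => if k % 2 = 1 then 1 else 0) = Jpos n := by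
  ext i j
  simp only [triSkew, Jpos, of_apply]
  split_ifs <;> first | (exfalso; omega) | norm_num

namespace IsPfaffian

variable {n : ℕ} {Pf : Matrix (Fin (2 * n)) (Fin (2 * n)) ℝ → ℝ}

theorem comp_mem_mvPolynomialFunctions (hPf : IsPfaffian n Pf) {σ : Type*}
    {A : (σ → ℝ) → Matrix (Fin (2 * n)) (Fin (2 * n)) ℝ}
    (hA : ∀ i j, (fun x => A x i j) ∈ mvPolynomialFunctions ℝ σ) :
    (fun x => Pf (A x)) ∈ mvPolynomialFunctions ℝ σ := by
  obtain ⟨⟨p, hp⟩, -, -⟩ := hPf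
  simp only [hp]
  exact aeval_mem_mvPolynomialFunctions p fun ij => hA ij.1 ij.2

theorem pf_mul_mul_transpose (hPf : IsPfaffian n Pf) (M : Matrix (Fin (2 * n)) (Fin (2 * n)) ℝ)
    {X : Matrix (Fin (2 * n)) (Fin (2 * n)) ℝ} (hX : Xᵀ = -X) :
    Pf (M * X * Mᵀ) = M.det * Pf X := by
  have hsq : ∀ M : Matrix (Fin (2 * n)) (Fin (2 * n)) ℝ,
      Pf (M * X * Mᵀ) ^ 2 = (M.det * Pf X) ^ 2 := fun M => by
    have hskew : (M * X * Mᵀ)ᵀ = -(M * X * Mᵀ) := by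
      simp [transpose_mul, hX, Matrix.mul_assoc]
    rw [hPf.2.1 _ hskew, mul_pow, hPf.2.1 X hX, det_mul, det_mul, det_transpose]
    ring
  by_cases h0 : Pf X = 0
  · simpa [h0] using hsq M
  let A : (Fin (2 * n) × Fin (2 * n) → ℝ) → Matrix (Fin (2 * n)) (Fin (2 * n)) ℝ :=
    fun x => of fun i j => x (i, j)
  have hA : ∀ i j, (fun x => A x i j) ∈ mvPolynomialFunctions ℝ _ :=
    fun i j => apply_mem_mvPolynomialFunctions (i, j)
  have hA₁ : A (fun ij => (1 : Matrix (Fin (2 * n)) (Fin (2 * n)) ℝ) ij.1 ij.2) = 1 := by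
    ext i j; rfl
  have key : (fun x => Pf (A x * X * (A x)ᵀ)) = fun x => (A x).det * Pf X := by
    refine eq_of_sq_eq_of_mem_mvPolynomialFunctions ?_ ?_ (fun x => hsq (A x))
      (x₀ := fun ij => (1 : Matrix _ _ ℝ) ij.1 ij.2) ?_ ?_
    · exact hPf.comp_mem_mvPolynomialFunctions fun i j =>
        mul_apply_mem_mvPolynomialFunctions
          (mul_apply_mem_mvPolynomialFunctions (B := fun _ => X) hA
            fun _ _ => const_mem_mvPolynomialFunctions _)
          (fun i j => hA j i) i j
    · exact Subalgebra.mul_mem _ (det_mem_mvPolynomialFunctions hA)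
        (const_mem_mvPolynomialFunctions _)
    · simp [hA₁]
    · simpa [hA₁] using h0
  exact congrFun key fun ij => M ij.1 ij.2

theorem pf_triSkew (hPf : IsPfaffian n Pf) (t : ℕ → ℝ) :
    Pf (triSkew (2 * n) t) = ∏ j ∈ Finset.range n, t (2 * j + 1) := by
  have hT : ∀ i j, (fun t => triSkew (2 * n) t i j) ∈ mvPolynomialFunctions ℝ ℕ := by
    intro i j
    simp only [triSkew, of_apply]
    split_ifs
    · exact apply_mem_mvPolynomialFunctions _
    · exact neg_mem (apply_mem_mvPolynomialFunctions _)
    · exact zero_mem _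
  have hprod : (fun t : ℕ → ℝ => ∏ j ∈ Finset.range n, t (2 * j + 1)) ∈
      mvPolynomialFunctions ℝ ℕ := by
    rw [← Finset.prod_fn]
    exact Subalgebra.prod_mem _ fun j _ => apply_mem_mvPolynomialFunctions _
  let t₀ : ℕ → ℝ := fun k => if k % 2 = 1 then 1 else 0
  have h₀ : Pf (triSkew (2 * n) t₀) = 1 := by rw [triSkew_eq_Jpos]; exact hPf.2.2
  have ht₀ : ∏ j ∈ Finset.range n, t₀ (2 * j + 1) = 1 := by simp [t₀]
  have key := eq_of_sq_eq_of_mem_mvPolynomialFunctions (hPf.comp_mem_mvPolynomialFunctions hT)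
    hprod (fun t => by rw [hPf.2.1 _ (triSkew_transpose _ _), det_triSkew, Finset.prod_pow])
    (h₀.trans ht₀.symm) (by rw [ht₀]; exact one_ne_zero)
  exact congrFun key t

end IsPfaffian

theorem sign_pfaffian_of_factorization_general (n : ℕ)
    (Pf : Matrix (Fin (2*n)) (Fin (2*n)) ℝ → ℝ) (hPf : IsPfaffian n Pf)
    (S : Matrix (Fin (2*n)) (Fin (2*n)) ℝ)
    (σ : Equiv.Perm (Fin (2*n)))
    (P : Matrix (Fin (2*n)) (Fin (2*n)) ℝ)
    (hP : P = Matrix.of (fun i j => if σ j = i then (1 : ℝ) else 0))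
    (L : Matrix (Fin (2*n)) (Fin (2*n)) ℝ)
    (hL : ∀ i j : Fin (2*n), i < j → L i j = 0)
    (t : ℕ → ℝ)
    (hfact : P * S * Pᵀ = L * triSkew (2*n) t * Lᵀ) :
    Real.sign (Pf S) =
      Real.sign P.det * (∏ j : Fin (2*n), Real.sign (L j j)) *
        ∏ j ∈ Finset.range n, Real.sign (t (2*j + 1)) := by
  have hPP : Pᵀ * P = 1 := by
    subst hP
    ext i j
    simp [mul_apply, one_apply]
  have hS : S = (Pᵀ * L) * triSkew (2*n) t * (Pᵀ * L)ᵀ := by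
    calc S = (Pᵀ * P) * S * (Pᵀ * P) := by rw [hPP, Matrix.one_mul, Matrix.mul_one]
      _ = Pᵀ * (P * S * Pᵀ) * P := by simp only [Matrix.mul_assoc]
      _ = _ := by rw [hfact, transpose_mul, transpose_transpose]; simp only [Matrix.mul_assoc]
  have hPfS : Pf S = P.det * (∏ j, L j j) * ∏ j ∈ Finset.range n, t (2*j + 1) := by
    rw [hS, hPf.pf_mul_mul_transpose _ (triSkew_transpose _ _), hPf.pf_triSkew, det_mul,
      det_transpose, det_of_isLowerTriangular L hL]
  rw [hPfS, Real.sign_mul, Real.sign_mul, Real.sign_prod, Real.sign_prod]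

/-- Sign of the Pfaffian from a permuted skew `L T Lᵀ` factorization. -/
theorem sign_pfaffian_of_factorization (n : ℕ)
    (Pf : Matrix (Fin (2*n)) (Fin (2*n)) ℝ → ℝ) (hPf : IsPfaffian n Pf)
    (S : Matrix (Fin (2*n)) (Fin (2*n)) ℝ) (hS : Sᵀ = -S) (hSdet : S.det ≠ 0)
    (σ : Equiv.Perm (Fin (2*n)))
    (P : Matrix (Fin (2*n)) (Fin (2*n)) ℝ)
    (hP : P = Matrix.of (fun i j => if σ j = i then (1 : ℝ) else 0))
    (L : Matrix (Fin (2*n)) (Fin (2*n)) ℝ)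
    (hL : ∀ i j : Fin (2*n), i < j → L i j = 0)
    (hLd : ∀ i : Fin (2*n), L i i ≠ 0)
    (t : ℕ → ℝ)
    (hfact : P * S * Pᵀ = L * triSkew (2*n) t * Lᵀ) :
    Real.sign (Pf S) =
      Real.sign P.det * (∏ j : Fin (2*n), Real.sign (L j j)) *
        ∏ j ∈ Finset.range n, Real.sign (t (2*j + 1)) :=
  sign_pfaffian_of_factorization_general n Pf hPf S σ P hP L hL t hfact
end
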